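/- arXiv:2207.10370 — 2 statements merged into one kernel-verified Lean document; each statement's English description precedes it below -/
import Mathlib

section
/- (Black–Scholes PDE.) For all real numbers t < T, x, k and all σ > 0, ∂BS/∂t(t,T,x,k,σ) + (σ²/2)·∂²BS/∂x²(t,T,x,k,σ) − (σ²/2)·∂BS/∂x(t,T,x,k,σ) = 0. -/
noncomputable section

/-- Standard normal density. -/
def phi (z : ℝ) : ℝ := (Real.sqrt (2 * Real.pi))⁻¹ * Real.exp (-z ^ 2 / 2)

/-- Standard normal cumulative distribution function. -/
def N (y : ℝ) : ℝ := ∫ z in Set.Iic y, phi z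

/-- Black–Scholes auxiliary quantity `d₁`. -/
def d1 (t T x k σ : ℝ) : ℝ :=
  (x - k) / (σ * Real.sqrt (T - t)) + σ * Real.sqrt (T - t) / 2

/-- Black–Scholes auxiliary quantity `d₂`. -/
def d2 (t T x k σ : ℝ) : ℝ :=
  (x - k) / (σ * Real.sqrt (T - t)) - σ * Real.sqrt (T - t) / 2

/-- Black–Scholes call price with log-spot `x`, log-strike `k`,
time to maturity `T - t` and volatility `σ`. -/
def BS (t T x k σ : ℝ) : ℝ :=
  Real.exp x * N (d1 t T x k σ) - Real.exp k * N (d2 t T x k σ)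

/-!
Write the price as `C(x, v) = eˣ N(d₊) - eᵏ N(d₋)` with total volatility `v = σ √(T - t)` and
`d± = (x - k) / v ± v / 2`. Since `d₊² - d₋² = 2 (x - k)`, the Gaussian weights agree:
`eᵏ φ(d₋) = eˣ φ(d₊)`. This cancellation gives `∂ₓC = eˣ N(d₊)`,
`∂ₓ²C = ∂ₓC + eˣ φ(d₊) / v` and `∂ᵥC = eˣ φ(d₊)`. As `∂ₜv = -σ² / (2 v)`, the terms
`∂ₜ BS` and `σ²/2 (∂ₓ² - ∂ₓ) BS` are `∓ σ² eˣ φ(d₊) / (2 v)`.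
-/

open Real Set MeasureTheory

theorem hasDerivAt_integral_Iic {E : Type*} [NormedAddCommGroup E] [NormedSpace ℝ E]
    [CompleteSpace E] {f : ℝ → E} (hf : Integrable f) (hc : Continuous f) (y : ℝ) :
    HasDerivAt (fun z => ∫ u in Iic z, f u) (f y) y := by
  have hsplit : (fun z => ∫ u in Iic z, f u)
      = fun z => (∫ u in Iic (0 : ℝ), f u) + ∫ u in (0 : ℝ)..z, f u := by
    funext z
    rw [← intervalIntegral.integral_Iic_sub_Iic hf.integrableOn hf.integrableOn]
    abel
  rw [hsplit]
  exact (intervalIntegral.integral_hasDerivAt_right hf.intervalIntegrable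
    (hc.stronglyMeasurableAtFilter _ _) hc.continuousAt).const_add _

theorem continuous_phi : Continuous phi := by
  unfold phi; fun_prop

theorem integrable_phi : Integrable phi := by
  have hphi : phi = fun z => (√(2 * π))⁻¹ * exp (-(1 / 2) * z ^ 2) := by
    funext z; unfold phi; ring_nf
  rw [hphi]
  exact (integrable_exp_neg_mul_sq (by norm_num)).const_mul _

theorem hasDerivAt_N (y : ℝ) : HasDerivAt N (phi y) y :=
  hasDerivAt_integral_Iic integrable_phi continuous_phi y

def dPlus (x k v : ℝ) : ℝ := (x - k) / v + v / 2

def dMinus (x k v : ℝ) : ℝ := (x - k) / v - v / 2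

def callPrice (x k v : ℝ) : ℝ := exp x * N (dPlus x k v) - exp k * N (dMinus x k v)

theorem BS_eq_callPrice (t T x k σ : ℝ) : BS t T x k σ = callPrice x k (σ * √(T - t)) := rfl

theorem exp_mul_phi_dMinus {v : ℝ} (hv : v ≠ 0) (x k : ℝ) :
    exp k * phi (dMinus x k v) = exp x * phi (dPlus x k v) := by
  unfold phi
  rw [mul_left_comm, mul_left_comm (exp x), ← exp_add, ← exp_add, dPlus, dMinus]
  congr 2
  field_simp
  ring

theorem hasDerivAt_dPlus_x (x k v : ℝ) : HasDerivAt (fun y => dPlus y k v) v⁻¹ x := by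
  simpa [dPlus, div_eq_mul_inv] using
    (((hasDerivAt_id x).sub_const k).mul_const v⁻¹).add_const (v / 2)

theorem hasDerivAt_dMinus_x (x k v : ℝ) : HasDerivAt (fun y => dMinus y k v) v⁻¹ x := by
  simpa [dMinus, div_eq_mul_inv] using
    (((hasDerivAt_id x).sub_const k).mul_const v⁻¹).sub_const (v / 2)

theorem hasDerivAt_callPrice_x {v : ℝ} (hv : v ≠ 0) (x k : ℝ) :
    HasDerivAt (fun y => callPrice y k v) (exp x * N (dPlus x k v)) x := by
  have h := ((hasDerivAt_exp x).mul ((hasDerivAt_N _).comp x (hasDerivAt_dPlus_x x k v))).sub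
    (((hasDerivAt_N _).comp x (hasDerivAt_dMinus_x x k v)).const_mul (exp k))
  refine h.congr_deriv ?_
  have := exp_mul_phi_dMinus hv x k
  simp only [Function.comp_apply]
  linear_combination (-v⁻¹) * this

theorem hasDerivAt_exp_mul_N_dPlus_x (x k v : ℝ) :
    HasDerivAt (fun y => exp y * N (dPlus y k v))
      (exp x * N (dPlus x k v) + exp x * phi (dPlus x k v) / v) x := by
  have h := (hasDerivAt_exp x).mul ((hasDerivAt_N _).comp x (hasDerivAt_dPlus_x x k v))
  refine h.congr_deriv ?_
  simp only [Function.comp_apply]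
  ring

theorem iteratedDeriv_two_callPrice_x {v : ℝ} (hv : v ≠ 0) (x k : ℝ) :
    iteratedDeriv 2 (fun y => callPrice y k v) x
      = exp x * N (dPlus x k v) + exp x * phi (dPlus x k v) / v := by
  have hdelta : deriv (fun y => callPrice y k v) = fun y => exp y * N (dPlus y k v) :=
    funext fun y => (hasDerivAt_callPrice_x hv y k).deriv
  rw [iteratedDeriv_succ, iteratedDeriv_one, hdelta]
  exact (hasDerivAt_exp_mul_N_dPlus_x x k v).deriv

theorem hasDerivAt_dPlus_v {v : ℝ} (hv : v ≠ 0) (x k : ℝ) :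
    HasDerivAt (fun w => dPlus x k w) (-((x - k) / v ^ 2) + 1 / 2) v := by
  simpa [dPlus, div_eq_mul_inv] using
    ((hasDerivAt_inv hv).const_mul (x - k)).fun_add ((hasDerivAt_id v).mul_const 2⁻¹)

theorem hasDerivAt_dMinus_v {v : ℝ} (hv : v ≠ 0) (x k : ℝ) :
    HasDerivAt (fun w => dMinus x k w) (-((x - k) / v ^ 2) - 1 / 2) v := by
  simpa [dMinus, div_eq_mul_inv] using
    ((hasDerivAt_inv hv).const_mul (x - k)).fun_sub ((hasDerivAt_id v).mul_const 2⁻¹)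

theorem hasDerivAt_callPrice_v {v : ℝ} (hv : v ≠ 0) (x k : ℝ) :
    HasDerivAt (callPrice x k) (exp x * phi (dPlus x k v)) v := by
  have h := (((hasDerivAt_N _).comp v (hasDerivAt_dPlus_v hv x k)).const_mul (exp x)).sub
    (((hasDerivAt_N _).comp v (hasDerivAt_dMinus_v hv x k)).const_mul (exp k))
  refine h.congr_deriv ?_
  have := exp_mul_phi_dMinus hv x k
  linear_combination ((x - k) / v ^ 2 + 1 / 2) * this

theorem hasDerivAt_mul_sqrt_sub {t T : ℝ} (htT : t < T) (σ : ℝ) :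
    HasDerivAt (fun s => σ * √(T - s)) (-(σ / (2 * √(T - t)))) t := by
  have h := ((hasDerivAt_id' t).const_sub T).sqrt (sub_pos.2 htT).ne'
  refine (h.const_mul σ).congr_deriv ?_
  field_simp

theorem bs_pde (t T x k σ : ℝ) (htT : t < T) (hσ : 0 < σ) :
    deriv (fun s => BS s T x k σ) t
      + σ ^ 2 / 2 * iteratedDeriv 2 (fun y => BS t T y k σ) x
      - σ ^ 2 / 2 * deriv (fun y => BS t T y k σ) x = 0 := by
  have hτ : 0 < √(T - t) := sqrt_pos.2 (sub_pos.2 htT)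
  have hv : σ * √(T - t) ≠ 0 := (mul_pos hσ hτ).ne'
  have htheta : HasDerivAt (fun s => callPrice x k (σ * √(T - s)))
      (exp x * phi (dPlus x k (σ * √(T - t))) * -(σ / (2 * √(T - t)))) t :=
    HasDerivAt.comp (h₂ := callPrice x k) t (hasDerivAt_callPrice_v hv x k)
      (hasDerivAt_mul_sqrt_sub htT σ)
  simp only [BS_eq_callPrice]
  rw [htheta.deriv, iteratedDeriv_two_callPrice_x hv, (hasDerivAt_callPrice_x hv x k).deriv]
  field_simp
  ring
end
end

section
/- For all real numbers t < T, x, k and all λ in (max(e^x − e^k, 0), e^x), if Θ = BS^{−1}(t,T,x,k,λ) satisfies the zero-vanna condition d2(t,T,x,k,Θ) = 0 (equivalently x − k = Θ²(T−t)/2), then (BS^{−1})″(t,T,x,k,λ) = 0. -/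
noncomputable section

/-- Inverse of the Black–Scholes price in the volatility argument on `(0, ∞)`. -/
def BSinv (t T x k l : ℝ) : ℝ := Function.invFunOn (BS t T x k) (Set.Ioi 0) l

/-!
The price `BS` is strictly increasing in `σ > 0`, with derivative the vega
`ν(σ) = eˣ φ(d₁) √(T - t) > 0`; as `σ → 0⁺` it drops below any level above
`max (eˣ - eᵏ) 0` (because `N` is `(2π)^{-1/2}`-Lipschitz and `d₁ - d₂ = σ √(T - t)`), and as
`σ → ∞` it tends to `eˣ`. So `BSinv` is a genuine inverse on the price interval, and the inverse
function theorem gives `BSinv' = 1 / ν ∘ BSinv`. Differentiating once more,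
`BSinv'' = -ν'(Θ) BSinv' / ν(Θ)²` with `ν'(σ) = ν(σ) d₁ d₂ / σ` (using `∂σ d₁ = -d₂ / σ`),
which vanishes when `d₂(Θ) = 0`.
-/

open Real MeasureTheory Set Filter Topology ProbabilityTheory

section Gaussian

lemma phi_eq_gaussianPDFReal : phi = gaussianPDFReal 0 1 := by
  ext z
  simp [phi, gaussianPDFReal]

lemma phi_pos (z : ℝ) : 0 < phi z := by
  unfold phi
  positivity

lemma phi_le_inv_sqrt_two_pi (z : ℝ) : phi z ≤ (√(2 * π))⁻¹ :=
  mul_le_of_le_one_right (by positivity) (exp_le_one_iff.mpr (by nlinarith [sq_nonneg z]))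

lemma hasDerivAt_phi (z : ℝ) : HasDerivAt phi (-z * phi z) z := by
  have h : HasDerivAt (fun w : ℝ => -w ^ 2 / 2) (-z) z := by
    simpa using ((hasDerivAt_pow 2 z).neg.div_const 2).congr_deriv (by ring)
  refine (h.exp.const_mul (√(2 * π))⁻¹).congr_deriv ?_
  simp only [phi]
  ring

lemma N_eq_cdf : N = cdf (gaussianReal 0 1) := by
  ext y
  rw [cdf_eq_real, measureReal_def, gaussianReal_apply_eq_integral _ one_ne_zero,
    ENNReal.toReal_ofReal (setIntegral_nonneg measurableSet_Iic fun z _ =>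
      gaussianPDFReal_nonneg 0 1 z), N, phi_eq_gaussianPDFReal]

lemma hasStrictDerivAt_N (y : ℝ) : HasStrictDerivAt N (phi y) y := by
  have hint : Integrable phi := phi_eq_gaussianPDFReal ▸ integrable_gaussianPDFReal 0 1
  have hN : N = fun u => N 0 + ∫ z in (0 : ℝ)..u, phi z := by
    ext u
    rw [← intervalIntegral.integral_Iic_sub_Iic hint.integrableOn hint.integrableOn, N, N]
    ring
  rw [hN]
  have hcont : Continuous phi := by unfold phi; fun_prop
  exact (hcont.integral_hasStrictDerivAt 0 y).const_add (N 0)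

lemma N_nonneg (y : ℝ) : 0 ≤ N y := N_eq_cdf ▸ cdf_nonneg _ y

lemma N_le_one (y : ℝ) : N y ≤ 1 := N_eq_cdf ▸ cdf_le_one _ y

lemma tendsto_N_atTop : Tendsto N atTop (𝓝 1) := N_eq_cdf ▸ tendsto_cdf_atTop _

lemma tendsto_N_atBot : Tendsto N atBot (𝓝 0) := N_eq_cdf ▸ tendsto_cdf_atBot _

lemma N_sub_N_le {y₁ y₂ : ℝ} (h : y₁ ≤ y₂) : N y₂ - N y₁ ≤ (√(2 * π))⁻¹ * (y₂ - y₁) :=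
  image_sub_le_mul_sub_of_deriv_le (fun y => (hasStrictDerivAt_N y).hasDerivAt.differentiableAt)
    (fun y => (hasStrictDerivAt_N y).hasDerivAt.deriv ▸ phi_le_inv_sqrt_two_pi y) h

end Gaussian

section BlackScholes

variable (t T x k : ℝ)

lemma d1_sub_d2 (σ : ℝ) : d1 t T x k σ - d2 t T x k σ = σ * √(T - t) := by
  unfold d1 d2
  ring

lemma hasStrictDerivAt_d1 {σ : ℝ} (hσ : σ ≠ 0) :
    HasStrictDerivAt (d1 t T x k) (-d2 t T x k σ / σ) σ := by
  have hd1 : d1 t T x k = fun u => (x - k) / √(T - t) * u⁻¹ + u * (√(T - t) / 2) := by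
    ext u
    simp only [d1]
    ring
  rw [hd1]
  refine (((hasStrictDerivAt_inv hσ).const_mul _).add
    ((hasStrictDerivAt_id σ).mul_const _)).congr_deriv ?_
  simp only [d2]
  field_simp
  ring

lemma hasStrictDerivAt_d2 {σ : ℝ} (hσ : σ ≠ 0) :
    HasStrictDerivAt (d2 t T x k) (-d1 t T x k σ / σ) σ := by
  have hd2 : d2 t T x k = fun u => (x - k) / √(T - t) * u⁻¹ - u * (√(T - t) / 2) := by
    ext u
    simp only [d2]
    ring
  rw [hd2]
  refine (((hasStrictDerivAt_inv hσ).const_mul _).sub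
    ((hasStrictDerivAt_id σ).mul_const _)).congr_deriv ?_
  simp only [d1]
  field_simp
  ring

lemma tendsto_d1_atTop (htT : t < T) : Tendsto (d1 t T x k) atTop atTop := by
  have hvol : Tendsto (fun σ => σ * √(T - t)) atTop atTop :=
    tendsto_id.atTop_mul_const (sqrt_pos.mpr (sub_pos.mpr htT))
  exact (tendsto_const_nhds.div_atTop hvol).add_atTop (hvol.atTop_div_const two_pos)

lemma tendsto_d2_atTop (htT : t < T) : Tendsto (d2 t T x k) atTop atBot := by
  have hvol : Tendsto (fun σ => σ * √(T - t)) atTop atTop :=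
    tendsto_id.atTop_mul_const (sqrt_pos.mpr (sub_pos.mpr htT))
  have hmoney : Tendsto (fun σ => (x - k) / (σ * √(T - t))) atTop (𝓝 0) :=
    tendsto_const_nhds.div_atTop hvol
  refine (hmoney.add_atBot (tendsto_neg_atTop_atBot.comp (hvol.atTop_div_const two_pos))).congr
    fun σ => ?_
  simp only [d2, Function.comp_apply]
  ring

lemma exp_mul_phi_d2 (htT : t < T) {σ : ℝ} (hσ : σ ≠ 0) :
    exp k * phi (d2 t T x k σ) = exp x * phi (d1 t T x k σ) := by
  have hs : √(T - t) ≠ 0 := (sqrt_pos.mpr (sub_pos.mpr htT)).ne'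
  have hexp : k + -d2 t T x k σ ^ 2 / 2 = x + -d1 t T x k σ ^ 2 / 2 := by
    unfold d1 d2
    field_simp
    ring
  simp only [phi]
  rw [mul_left_comm, ← exp_add, hexp, exp_add, mul_left_comm]

def vega (σ : ℝ) : ℝ := exp x * phi (d1 t T x k σ) * √(T - t)

lemma vega_pos (htT : t < T) (σ : ℝ) : 0 < vega t T x k σ := by
  have := phi_pos (d1 t T x k σ)
  have := sqrt_pos.mpr (sub_pos.mpr htT)
  unfold vega
  positivity

lemma hasStrictDerivAt_BS (htT : t < T) {σ : ℝ} (hσ : σ ≠ 0) :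
    HasStrictDerivAt (BS t T x k) (vega t T x k σ) σ := by
  have h := (((hasStrictDerivAt_N _).comp σ (hasStrictDerivAt_d1 t T x k hσ)).const_mul
    (exp x)).sub (((hasStrictDerivAt_N _).comp σ (hasStrictDerivAt_d2 t T x k hσ)).const_mul (exp k))
  refine h.congr_deriv ?_
  rw [← mul_assoc, ← mul_assoc, exp_mul_phi_d2 t T x k htT hσ, vega]
  field_simp
  linear_combination phi (d1 t T x k σ) * d1_sub_d2 t T x k σ

lemma hasDerivAt_vega {σ : ℝ} (hσ : σ ≠ 0) :
    HasDerivAt (vega t T x k) (vega t T x k σ * d1 t T x k σ * d2 t T x k σ / σ) σ := by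
  have h := (((hasDerivAt_phi _).comp σ (hasStrictDerivAt_d1 t T x k hσ).hasDerivAt).const_mul
    (exp x)).mul_const (√(T - t))
  refine h.congr_deriv ?_
  simp only [vega]
  ring

lemma continuousOn_BS (htT : t < T) : ContinuousOn (BS t T x k) (Ioi 0) := fun _ hσ =>
  (hasStrictDerivAt_BS t T x k htT (ne_of_gt hσ)).hasDerivAt.continuousAt.continuousWithinAt

lemma BS_strictMonoOn (htT : t < T) : StrictMonoOn (BS t T x k) (Ioi 0) :=
  strictMonoOn_of_hasDerivWithinAt_pos (convex_Ioi 0) (continuousOn_BS t T x k htT)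
    (fun σ hσ => (hasStrictDerivAt_BS t T x k htT (ne_of_gt (interior_subset hσ : σ ∈ Ioi 0))
      ).hasDerivAt.hasDerivWithinAt)
    (fun σ _ => vega_pos t T x k htT σ)

lemma BS_le_max_add {σ : ℝ} (hσ : 0 ≤ σ) :
    BS t T x k σ ≤ max (exp x - exp k) 0 + exp x * ((√(2 * π))⁻¹ * (σ * √(T - t))) := by
  have hd : d2 t T x k σ ≤ d1 t T x k σ := by
    linarith [d1_sub_d2 t T x k σ, mul_nonneg hσ (sqrt_nonneg (T - t))]
  have hspread := N_sub_N_le hd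
  rw [d1_sub_d2] at hspread
  have hintrinsic : (exp x - exp k) * N (d2 t T x k σ) ≤ max (exp x - exp k) 0 :=
    calc (exp x - exp k) * N (d2 t T x k σ)
        ≤ max (exp x - exp k) 0 * N (d2 t T x k σ) :=
          mul_le_mul_of_nonneg_right (le_max_left _ _) (N_nonneg _)
      _ ≤ max (exp x - exp k) 0 := mul_le_of_le_one_right (le_max_right _ _) (N_le_one _)
  have hsplit : BS t T x k σ = exp x * (N (d1 t T x k σ) - N (d2 t T x k σ))
      + (exp x - exp k) * N (d2 t T x k σ) := by
    unfold BS
    ring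
  nlinarith [exp_pos x]

lemma exists_BS_lt {p : ℝ} (hp : max (exp x - exp k) 0 < p) : ∃ σ ∈ Ioi 0, BS t T x k σ < p := by
  have hbound : Tendsto (fun σ => max (exp x - exp k) 0 + exp x * ((√(2 * π))⁻¹ * (σ * √(T - t))))
      (𝓝[>] 0) (𝓝 (max (exp x - exp k) 0)) := by
    have hcont : Continuous
        fun σ => max (exp x - exp k) 0 + exp x * ((√(2 * π))⁻¹ * (σ * √(T - t))) := by
      fun_prop
    simpa using (hcont.tendsto 0).mono_left nhdsWithin_le_nhds
  obtain ⟨σ, hlt, hσ⟩ := ((hbound.eventually_lt_const hp).and self_mem_nhdsWithin).exists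
  exact ⟨σ, hσ, (BS_le_max_add t T x k (le_of_lt hσ)).trans_lt hlt⟩

lemma tendsto_BS_atTop (htT : t < T) : Tendsto (BS t T x k) atTop (𝓝 (exp x)) := by
  have h := ((tendsto_N_atTop.comp (tendsto_d1_atTop t T x k htT)).const_mul (exp x)).sub
    ((tendsto_N_atBot.comp (tendsto_d2_atTop t T x k htT)).const_mul (exp k))
  rw [mul_one, mul_zero, sub_zero] at h
  exact h

lemma BS_surjOn (htT : t < T) :
    SurjOn (BS t T x k) (Ioi 0) (Ioo (max (exp x - exp k) 0) (exp x)) := by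
  rintro p ⟨hlo, hhi⟩
  obtain ⟨σ₀, hσ₀, hlt⟩ := exists_BS_lt t T x k hlo
  obtain ⟨σ₁, hgt, hσ₁⟩ :=
    (((tendsto_BS_atTop t T x k htT).eventually_const_lt hhi).and (eventually_gt_atTop 0)).exists
  exact isPreconnected_Ioi.intermediate_value hσ₀ hσ₁ (continuousOn_BS t T x k htT) ⟨hlt.le, hgt.le⟩

end BlackScholes

section BSinv

variable (t T x k : ℝ) {p : ℝ}

lemma BSinv_mem (htT : t < T) (hp : p ∈ Ioo (max (exp x - exp k) 0) (exp x)) :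
    BSinv t T x k p ∈ Ioi 0 :=
  (BS_surjOn t T x k htT).mapsTo_invFunOn hp

lemma BS_BSinv (htT : t < T) (hp : p ∈ Ioo (max (exp x - exp k) 0) (exp x)) :
    BS t T x k (BSinv t T x k p) = p :=
  (BS_surjOn t T x k htT).rightInvOn_invFunOn hp

lemma BSinv_BS (htT : t < T) {σ : ℝ} (hσ : σ ∈ Ioi 0) : BSinv t T x k (BS t T x k σ) = σ :=
  (BS_strictMonoOn t T x k htT).injOn.leftInvOn_invFunOn hσ

lemma hasDerivAt_BSinv (htT : t < T) (hp : p ∈ Ioo (max (exp x - exp k) 0) (exp x)) :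
    HasDerivAt (BSinv t T x k) (vega t T x k (BSinv t T x k p))⁻¹ p := by
  have hθ := BSinv_mem t T x k htT hp
  have hleft : ∀ᶠ σ in 𝓝 (BSinv t T x k p), BSinv t T x k (BS t T x k σ) = σ :=
    eventually_of_mem (isOpen_Ioi.mem_nhds hθ) fun σ hσ => BSinv_BS t T x k htT hσ
  have h := (hasStrictDerivAt_BS t T x k htT (ne_of_gt hθ)).to_local_left_inverse
    (vega_pos t T x k htT _).ne' hleft
  rw [BS_BSinv t T x k htT hp] at h
  exact h.hasDerivAt

end BSinv

theorem bsinv_second_derivative_zero_vanna (t T x k l : ℝ) (htT : t < T)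
    (hl : l ∈ Set.Ioo (max (Real.exp x - Real.exp k) 0) (Real.exp x))
    (hzv : d2 t T x k (BSinv t T x k l) = 0) :
    iteratedDeriv 2 (fun p => BSinv t T x k p) l = 0 := by
  have hθ := BSinv_mem t T x k htT hl
  have hderiv : deriv (BSinv t T x k) =ᶠ[𝓝 l] fun p => (vega t T x k (BSinv t T x k p))⁻¹ :=
    eventually_of_mem (isOpen_Ioo.mem_nhds hl) fun p hp => (hasDerivAt_BSinv t T x k htT hp).deriv
  have hvanna : HasDerivAt (vega t T x k) 0 (BSinv t T x k l) := by
    simpa [hzv] using hasDerivAt_vega t T x k (ne_of_gt hθ)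
  rw [iteratedDeriv_succ, iteratedDeriv_one, hderiv.deriv_eq]
  exact ((hvanna.comp l (hasDerivAt_BSinv t T x k htT hl)).inv
    (vega_pos t T x k htT _).ne').deriv.trans (by simp)
end
end
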